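/- arXiv:1901.02207 — 2 statements merged into one kernel-verified Lean document; each statement's English description precedes it below -/
import Mathlib

section
/- Let M be a monoid satisfying the identities x² ≈ x³, x·y²·x ≈ (xy)², x·y·t·x·z₁²···z_n²·y ≈ y·x·t·x·z₁²···z_n²·y, and x·z₁²···z_n²·y·t·x·y ≈ x·z₁²···z_n²·y·t·y·x (for all n ≥ 0). Then for any elements z₁, …, z_r of M and any transposition of adjacent indices i, i+1, one has (z₁⋯z_i z_{i+1}⋯z_r)² = (z₁⋯z_{i+1} z_i⋯z_r)². Consequently, the square (z₁⋯z_r)² is invariant under any permutation of the factors z₁, …, z_r. -/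
/-!
Squaring a product `a x y b` places `x y` on both sides of `b a`; the identities
`x y t x y = y x t x y` and `y x t x y = y x t y x` (the case n = 0 of the last two laws) swap each
copy in turn. Invariance under all permutations follows by induction on `List.Perm`, the
identity `x y² x = (x y)²` letting the square pass a fixed head factor.
-/

section SquarePermInvariance

variable {M : Type*} [Monoid M]

theorem sq_mul_mul_swap_of_swap_laws
    (hleft : ∀ x y t : M, x * y * t * x * y = y * x * t * x * y)
    (hright : ∀ x y t : M, x * y * t * x * y = x * y * t * y * x) (a b x y : M) :
    (a * x * y * b) ^ 2 = (a * y * x * b) ^ 2 :=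
  calc (a * x * y * b) ^ 2 = a * (x * y * (b * a) * x * y) * b := by
        simp only [pow_two, mul_assoc]
    _ = a * (y * x * (b * a) * x * y) * b := by rw [hleft]
    _ = a * (y * x * (b * a) * y * x) * b := by rw [hright y x]
    _ = (a * y * x * b) ^ 2 := by simp only [pow_two, mul_assoc]

theorem sq_prod_eq_of_perm (hsq : ∀ x y : M, x * y ^ 2 * x = (x * y) ^ 2)
    (hswap : ∀ a b x y : M, (a * x * y * b) ^ 2 = (a * y * x * b) ^ 2)
    {L L' : List M} (hLL' : L.Perm L') : L.prod ^ 2 = L'.prod ^ 2 := by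
  induction hLL' with
  | nil => rfl
  | cons z _ ih => simp only [List.prod_cons, ← hsq, ih]
  | swap x y l => simpa only [List.prod_cons, one_mul, mul_assoc] using hswap 1 l.prod y x
  | trans _ _ ih₁ ih₂ => exact ih₁.trans ih₂

end SquarePermInvariance

theorem square_perm_invariant_general {M : Type*} [Monoid M]
    (h2 : ∀ x y : M, x * y ^ 2 * x = (x * y) ^ 2)
    (h3 : ∀ (x y t : M) (zs : List M),
      x * y * t * x * (zs.map (· ^ 2)).prod * y =
      y * x * t * x * (zs.map (· ^ 2)).prod * y)
    (h4 : ∀ (x y t : M) (zs : List M),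
      x * (zs.map (· ^ 2)).prod * y * t * x * y =
      x * (zs.map (· ^ 2)).prod * y * t * y * x) :
    (∀ (p q : List M) (zi zj : M),
      (p.prod * zi * zj * q.prod) ^ 2 = (p.prod * zj * zi * q.prod) ^ 2) ∧
    (∀ L L' : List M, L.Perm L' → (L.prod) ^ 2 = (L'.prod) ^ 2) := by
  have hswap : ∀ a b x y : M, (a * x * y * b) ^ 2 = (a * y * x * b) ^ 2 :=
    sq_mul_mul_swap_of_swap_laws
      (fun x y t => by simpa only [List.map_nil, List.prod_nil, mul_one] using h3 x y t [])
      (fun x y t => by simpa only [List.map_nil, List.prod_nil, mul_one] using h4 x y t [])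
  exact ⟨fun p q zi zj => hswap _ _ _ _, fun _ _ => sq_prod_eq_of_perm h2 hswap⟩

/-- In a monoid satisfying x² ≈ x³, xy²x ≈ (xy)², xytxz₁²⋯z_n²y ≈ yxtxz₁²⋯z_n²y and
xz₁²⋯z_n²ytxy ≈ xz₁²⋯z_n²ytyx, the square of a product is invariant under swapping
two adjacent factors, hence under any permutation of the factors. -/
theorem square_perm_invariant {M : Type*} [Monoid M]
    (h1 : ∀ x : M, x ^ 2 = x ^ 3)
    (h2 : ∀ x y : M, x * y ^ 2 * x = (x * y) ^ 2)
    (h3 : ∀ (x y t : M) (zs : List M),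
      x * y * t * x * (zs.map (· ^ 2)).prod * y =
      y * x * t * x * (zs.map (· ^ 2)).prod * y)
    (h4 : ∀ (x y t : M) (zs : List M),
      x * (zs.map (· ^ 2)).prod * y * t * x * y =
      x * (zs.map (· ^ 2)).prod * y * t * y * x) :
    (∀ (p q : List M) (zi zj : M),
      (p.prod * zi * zj * q.prod) ^ 2 = (p.prod * zj * zi * q.prod) ^ 2) ∧
    (∀ L L' : List M, L.Perm L' → (L.prod) ^ 2 = (L'.prod) ^ 2) :=
  square_perm_invariant_general h2 h3 h4
end

section
/- Let M be a monoid satisfying the identities x² ≈ x³ and x·y²·x ≈ (xy)² ≈ (xy)²·x ≈ y·x²·y ≈ (yx)². Then for any elements z₁, …, z_r of M and any z equal to some z_j, one has z·(z₁⋯z_r)² = (z₁⋯z_r)² = (z₁⋯z_r)²·z. More generally, if w is a product of squares of elements each lying in {z₁, …, z_r}, then w·(z₁⋯z_r)² = (z₁⋯z_r)² = (z₁⋯z_r)²·w. -/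
/-!
The identities give `(xy)² = (xy)²x = yx²y = (yx)²`, so squares of products may be rotated
cyclically and absorb their first factor on the right, hence also on the left, as
`x(xy)² = x(yx)² = (xy)²x`. If `z` occurs in `z₁⋯z_r = A z B`, rotating `(AzB)²` to `(z(BA))²` resp.
`((BA)z)²` exhibits `z` as the first resp. last factor, so it is absorbed on both sides. The
elements absorbed on both sides by a fixed `e` form a submonoid, which then contains every
product of squares of products of the `zᵢ`.
-/

section

variable {M : Type*} [Monoid M]

def absorberSubmonoid (e : M) : Submonoid M where
  carrier := {a | a * e = e ∧ e * a = e}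
  one_mem' := by simp
  mul_mem' := by
    rintro a b ⟨hae, eha⟩ ⟨hbe, ehb⟩
    exact ⟨by rw [mul_assoc, hbe, hae], by rw [← mul_assoc, eha, ehb]⟩

theorem mem_absorberSubmonoid {e a : M} : a ∈ absorberSubmonoid e ↔ a * e = e ∧ e * a = e :=
  Iff.rfl

theorem mul_mul_sq_eq_mul_sq (comm : ∀ x y : M, (x * y) ^ 2 = (y * x) ^ 2)
    (absorb : ∀ x y : M, (x * y) ^ 2 * x = (x * y) ^ 2) (x y : M) :
    x * (x * y) ^ 2 = (x * y) ^ 2 :=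
  calc x * (x * y) ^ 2 = x * (y * x) ^ 2 := by rw [comm]
    _ = (x * y) ^ 2 * x := by simp only [sq, mul_assoc]
    _ = (x * y) ^ 2 := absorb x y

theorem mul_sq_mul_right_eq_mul_sq (comm : ∀ x y : M, (x * y) ^ 2 = (y * x) ^ 2)
    (absorb : ∀ x y : M, (x * y) ^ 2 * x = (x * y) ^ 2) (x y : M) :
    (x * y) ^ 2 * y = (x * y) ^ 2 := by
  rw [comm, absorb]

theorem mem_absorberSubmonoid_sq_prod_of_mem (comm : ∀ x y : M, (x * y) ^ 2 = (y * x) ^ 2)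
    (absorb : ∀ x y : M, (x * y) ^ 2 * x = (x * y) ^ 2) {zs : List M} {z : M} (hz : z ∈ zs) :
    z ∈ absorberSubmonoid (zs.prod ^ 2) := by
  obtain ⟨s, t, rfl⟩ := List.append_of_mem hz
  have rotate_left : (s ++ z :: t).prod ^ 2 = (z * (t.prod * s.prod)) ^ 2 := by
    rw [List.prod_append, List.prod_cons, comm s.prod, mul_assoc]
  have rotate_right : (s ++ z :: t).prod ^ 2 = (t.prod * s.prod * z) ^ 2 := by
    rw [List.prod_append, List.prod_cons, ← mul_assoc, comm, mul_assoc]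
  constructor
  · rw [rotate_left, mul_mul_sq_eq_mul_sq comm absorb]
  · rw [rotate_right, mul_sq_mul_right_eq_mul_sq comm absorb]

end

theorem square_absorbs_general {M : Type*} [Monoid M]
    (h2 : ∀ x y : M, x * y ^ 2 * x = (x * y) ^ 2 ∧ (x * y) ^ 2 = (x * y) ^ 2 * x ∧
      (x * y) ^ 2 * x = y * x ^ 2 * y ∧ y * x ^ 2 * y = (y * x) ^ 2) :
    (∀ (zs : List M) (z : M), z ∈ zs →
      z * (zs.prod) ^ 2 = (zs.prod) ^ 2 ∧ (zs.prod) ^ 2 = (zs.prod) ^ 2 * z) ∧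
    (∀ (zs ws : List M),
      (∀ u ∈ ws, ∃ L : List M, (∀ a ∈ L, a ∈ zs) ∧ u = (L.prod) ^ 2) →
      ws.prod * (zs.prod) ^ 2 = (zs.prod) ^ 2 ∧
      (zs.prod) ^ 2 = (zs.prod) ^ 2 * ws.prod) := by
  have comm : ∀ x y : M, (x * y) ^ 2 = (y * x) ^ 2 := fun x y => by
    rw [(h2 x y).2.1, (h2 x y).2.2.1, (h2 x y).2.2.2]
  have absorb : ∀ x y : M, (x * y) ^ 2 * x = (x * y) ^ 2 := fun x y => (h2 x y).2.1.symm
  have factor_mem {zs : List M} {z : M} (hz : z ∈ zs) := mem_absorberSubmonoid_sq_prod_of_mem comm absorb hz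
  refine ⟨fun zs z hz => ⟨(factor_mem hz).1, (factor_mem hz).2.symm⟩, fun zs ws hws => ?_⟩
  have squares_mem : ∀ u ∈ ws, u ∈ absorberSubmonoid (zs.prod ^ 2) := by
    intro u hu
    obtain ⟨L, hL, rfl⟩ := hws u hu
    exact pow_mem (Submonoid.list_prod_mem _ fun a ha => factor_mem (hL a ha)) 2
  obtain ⟨left, right⟩ := mem_absorberSubmonoid.1 (Submonoid.list_prod_mem _ squares_mem)
  exact ⟨left, right.symm⟩

/-- In a monoid satisfying x² ≈ x³ and xy²x ≈ (xy)² ≈ (xy)²x ≈ yx²y ≈ (yx)²,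
any square of a product absorbs (on either side) each of its factors, and more
generally any product of squares of elements drawn from its factors. -/
theorem square_absorbs {M : Type*} [Monoid M]
    (h1 : ∀ x : M, x ^ 2 = x ^ 3)
    (h2 : ∀ x y : M, x * y ^ 2 * x = (x * y) ^ 2 ∧ (x * y) ^ 2 = (x * y) ^ 2 * x ∧
      (x * y) ^ 2 * x = y * x ^ 2 * y ∧ y * x ^ 2 * y = (y * x) ^ 2) :
    (∀ (zs : List M) (z : M), z ∈ zs →
      z * (zs.prod) ^ 2 = (zs.prod) ^ 2 ∧ (zs.prod) ^ 2 = (zs.prod) ^ 2 * z) ∧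
    (∀ (zs ws : List M),
      (∀ u ∈ ws, ∃ L : List M, (∀ a ∈ L, a ∈ zs) ∧ u = (L.prod) ^ 2) →
      ws.prod * (zs.prod) ^ 2 = (zs.prod) ^ 2 ∧
      (zs.prod) ^ 2 = (zs.prod) ^ 2 * ws.prod) :=
  square_absorbs_general h2
end
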